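/- The characteristic polynomials of the non-crossing partition lattices satisfy the recurrence χ(NC_n,t) = t·χ(NC_{n−1},t) − Σ_{i=1}^{n−1} χ(NC_i,t)·χ(NC_{n−i},t), with χ(NC_1,t) = 1. -/

import Mathlib

/-- A partition (equivalence relation) of `Fin n` is non-crossing if there are no
`i < j < k < l` with `i ∼ k`, `j ∼ l` but `i ≁ j`. -/
def Noncrossing {n : ℕ} (s : Setoid (Fin n)) : Prop :=
  ¬ ∃ i j k l : Fin n, i < j ∧ j < k ∧ k < l ∧ s.r i k ∧ s.r j l ∧ ¬ s.r i j

/-- The lattice `NC n` of non-crossing partitions of `{1,…,n}` (modelled on `Fin n`),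
ordered by refinement (the order inherited from the lattice of all partitions). -/
def NC (n : ℕ) := {s : Setoid (Fin n) // Noncrossing s}

instance (n : ℕ) : PartialOrder (NC n) :=
  inferInstanceAs (PartialOrder {s : Setoid (Fin n) // Noncrossing s})

/-- The partition of `{1,…,n}` whose only non-singleton block is `{1,…,n−1}`
(in `Fin n`: the block of all elements with value `< n - 1`). -/
def ncPiRel (n : ℕ) : Setoid (Fin n) :=
  ⟨fun i j => (i : ℕ) = j ∨ ((i : ℕ) < n - 1 ∧ (j : ℕ) < n - 1),
   ⟨fun i => Or.inl rfl, fun h => by omega, fun h1 h2 => by omega⟩⟩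

theorem ncPiRel_noncrossing (n : ℕ) : Noncrossing (ncPiRel n) := by
  rintro ⟨i, j, k, l, hij, hjk, hkl, hik, hjl, hnij⟩
  simp only [Fin.lt_def] at hij hjk hkl
  have hik : (i : ℕ) = k ∨ ((i : ℕ) < n - 1 ∧ (k : ℕ) < n - 1) := hik
  have hjl : (j : ℕ) = l ∨ ((j : ℕ) < n - 1 ∧ (l : ℕ) < n - 1) := hjl
  have hnij : ¬ ((i : ℕ) = j ∨ ((i : ℕ) < n - 1 ∧ (j : ℕ) < n - 1)) := hnij
  omega

/-- `π = 12⋯(n−1)` as an element of `NC n`. -/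
def ncPi (n : ℕ) : NC n := ⟨ncPiRel n, ncPiRel_noncrossing n⟩

/-- The discrete partition (all blocks singletons), the bottom element of `NC n`. -/
def ncBot (n : ℕ) : NC n :=
  ⟨⟨fun i j => i = j, ⟨fun _ => rfl, fun h => h.symm, fun h1 h2 => h1.trans h2⟩⟩,
   by
    rintro ⟨i, j, k, l, hij, hjk, hkl, hik, hjl, hnij⟩
    exact absurd (hik ▸ hij.trans hjk) (lt_irrefl _)⟩

/-- The number of blocks of a non-crossing partition. -/
noncomputable def ncBlocks {n : ℕ} (p : NC n) : ℕ := Nat.card (Quotient p.1)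

open Polynomial in
/-- The characteristic polynomial `χ(NC_n, t) = Σ_{π ∈ NC_n} μ(⊥,π) t^{(n−1)−ρ(π)}`
of the non-crossing partition lattice, where the rank is
`ρ(π) = n − (number of blocks of π)` and `mu` is the Möbius function. -/
noncomputable def ncChi (mu : ∀ k, NC k → NC k → ℤ) [∀ k, Fintype (NC k)]
    (k : ℕ) : Polynomial ℤ :=
  ∑ p : NC k, C (mu k (ncBot k) p) * X ^ ((k - 1) - (k - ncBlocks p))


/-!
Let `w = x·B(x)`, where `B = Σₖ Aₖ xᵏ` (`blockSeries`) and
`Aₖ = Σ_{σ ∈ NC_k} μ(⊥,σ) t^{#blocks σ} = t·χ(NC_k,t)` for `k ≥ 1`. Decomposing a non-crossing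
partition along the block of its last point, and using that the Möbius function is multiplicative
when a partition is inserted into a gap of another, gives `B = 1 + t·w·v(w)` with
`v = Σ_r μ_{NC_{r+1}}(⊥,⊤) x^r` (`topMobiusSeries`). At `t = 1` the lattice property
`Σ_σ μ(⊥,σ) = 0` turns this into `P·v(P) = x` for `P = x + x²`; since `P` has a compositional
inverse this forces `x·v + (x·v)² = x`. Substituting `w` gives `Y + Y² = w` for `Y = w·v(w)`
(`chiSeries`), whose coefficients are the `χ(NC_k,t)`, and comparing coefficients is the
recurrence.
-/

open Finset

def skipGap (c s i : ℕ) : ℕ := if i < c then i else i + s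

def unskipGap (c s x : ℕ) : ℕ := if x < c then x else x - s

section Gap

variable {c s : ℕ}

lemma skipGap_strictMono : StrictMono (skipGap c s) := fun i j h => by
  unfold skipGap; split_ifs <;> omega

lemma skipGap_notMem_gap (i : ℕ) : skipGap c s i < c ∨ c + s ≤ skipGap c s i := by
  unfold skipGap; split_ifs <;> omega

lemma skipGap_lt {u m i : ℕ} (h₂ : m = s + u) (hi : i < u) : skipGap c s i < m := by
  unfold skipGap; split_ifs <;> omega

lemma unskipGap_skipGap (i : ℕ) : unskipGap c s (skipGap c s i) = i := by
  unfold unskipGap skipGap; split_ifs <;> omega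

lemma skipGap_unskipGap {x : ℕ} (hx : x < c ∨ c + s ≤ x) : skipGap c s (unskipGap c s x) = x := by
  unfold unskipGap skipGap; split_ifs <;> omega

lemma unskipGap_lt {u m x : ℕ} (h₁ : c ≤ u) (h₂ : m = s + u) (hx : x < m)
    (hout : x < c ∨ c + s ≤ x) : unskipGap c s x < u := by
  unfold unskipGap; split_ifs <;> omega

lemma unskipGap_lt_unskipGap {x y : ℕ} (hx : x < c ∨ c + s ≤ x) (hy : y < c ∨ c + s ≤ y)
    (hxy : x < y) : unskipGap c s x < unskipGap c s y := by
  unfold unskipGap; split_ifs <;> omega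

end Gap

lemma eq_of_forall_sum_filter_le_eq {α M : Type*} [PartialOrder α] [Fintype α] [AddCommGroup M]
    [DecidableLE α] {f g : α → M} {b : α}
    (h : ∀ b' ≤ b, ∑ c ∈ univ.filter (· ≤ b'), f c = ∑ c ∈ univ.filter (· ≤ b'), g c) :
    ∀ b' ≤ b, f b' = g b' := by
  classical
  intro b' hb'
  induction b' using WellFoundedLT.induction with
  | ind b' ih =>
  have split : ∀ φ : α → M,
      ∑ c ∈ univ.filter (· ≤ b'), φ c = φ b' + ∑ c ∈ univ.filter (· < b'), φ c := fun φ => by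
    rw [← sum_insert (by simp)]
    congr 1
    ext c
    simp [le_iff_lt_or_eq, or_comm, eq_comm]
  have hlt : ∑ c ∈ univ.filter (· < b'), f c = ∑ c ∈ univ.filter (· < b'), g c :=
    sum_congr rfl fun c hc => ih c (mem_filter.mp hc).2 ((mem_filter.mp hc).2.le.trans hb')
  simpa [split, hlt] using h b' hb'

namespace PowerSeries

variable {R : Type*} [CommRing R] {w : R⟦X⟧}

lemma map_subst_of_constantCoeff_eq_zero {S : Type*} [CommRing S] (h : R →+* S)
    (hw : constantCoeff w = 0) (f : R⟦X⟧) : map h (f.subst w) = (map h f).subst (map h w) :=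
  map_subst (HasSubst.of_constantCoeff_zero' hw) f

lemma coeff_sq_of_constantCoeff_eq_zero {Y : R⟦X⟧} (hY : constantCoeff Y = 0) {n : ℕ}
    (hn : 1 ≤ n) : coeff n (Y ^ 2) = ∑ i ∈ Ico 1 n, coeff i Y * coeff (n - i) Y := by
  rw [sq, coeff_mul, Nat.sum_antidiagonal_eq_sum_range_succ_mk, sum_range_succ,
    sum_range_eq_add_Ico _ (by omega)]
  simp [hY]

lemma eq_zero_of_forall_eq_mul_succ (hw : constantCoeff w = 0) {E : ℕ → R⟦X⟧}
    (h : ∀ r, E r = w * E (r + 1)) (r : ℕ) : E r = 0 := by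
  have hpow : ∀ N r, E r = w ^ N * E (r + N) := fun N => by
    induction N with
    | zero => simp
    | succ N ih => intro r; rw [ih, h, pow_succ, mul_assoc, add_assoc]
  ext n
  rw [hpow (n + 1), map_zero]
  exact X_pow_dvd_iff.mp ((pow_dvd_pow_of_dvd (X_dvd_iff.mpr hw) _).mul_right _) n (by omega)

lemma subst_mk_eq (hw : constantCoeff w = 0) (a : ℕ → R) :
    (mk a).subst w = C (a 0) + w * (mk fun i => a (i + 1)).subst w := by
  have hw' := HasSubst.of_constantCoeff_zero' hw
  conv_lhs => rw [eq_X_mul_shift_add_const (mk a)]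
  rw [subst_add hw', subst_mul hw', subst_X hw', subst_C, ← C_apply, add_comm]
  simp only [← coeff_zero_eq_constantCoeff_apply, coeff_mk]

lemma eq_mul_subst_of_forall_eq_mul_add (hw : constantCoeff w = 0) (a : ℕ → R)
    {S : ℕ → R⟦X⟧} (hS : ∀ r, S r = w * (C (a r) + S (r + 1))) :
    S 0 = w * (mk a).subst w := by
  set U : ℕ → R⟦X⟧ := fun r => w * (mk fun i => a (r + i)).subst w
  have hU : ∀ r, U r = w * (C (a r) + U (r + 1)) := fun r => by
    simp only [U, subst_mk_eq hw (fun i => a (r + i)), add_zero, add_assoc, add_comm 1]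
  have := eq_zero_of_forall_eq_mul_succ hw (E := fun r => S r - U r)
    (fun r => by rw [hS, hU]; ring) 0
  simpa [U, sub_eq_zero] using this

lemma eq_of_subst_eq_subst {P : R⟦X⟧} (hP₀ : constantCoeff P = 0) (hP₁ : IsUnit (coeff 1 P))
    {f g : R⟦X⟧} (h : f.subst P = g.subst P) : f = g := by
  have hP := HasSubst.of_constantCoeff_zero' hP₀
  have hQ := HasSubst.substInvOfIsUnit P hP₁
  have key : ∀ f : R⟦X⟧, subst (P.substInvOfIsUnit hP₁) (f.subst P) = f := fun f => by
    rw [subst_comp_subst_apply hP hQ, subst_substInvOfIsUnit_right P hP₀, X_subst]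
  rw [← key f, h, key]

end PowerSeries

namespace NC

open scoped Classical

variable {k : ℕ}

/-- Natural-number indices keep the index arithmetic of gluing within reach of `omega`. -/
def Rel (σ : NC k) (a b : ℕ) : Prop :=
  ∃ (ha : a < k) (hb : b < k), σ.1.r ⟨a, ha⟩ ⟨b, hb⟩

section Rel

variable {σ τ : NC k} {a b c : ℕ}

lemma Rel.lt_left (h : σ.Rel a b) : a < k := h.1

lemma Rel.lt_right (h : σ.Rel a b) : b < k := h.2.1

lemma rel_refl (σ : NC k) (ha : a < k) : σ.Rel a a := ⟨ha, ha, σ.1.refl _⟩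

lemma Rel.symm (h : σ.Rel a b) : σ.Rel b a :=
  ⟨h.2.1, h.1, σ.1.symm h.2.2⟩

lemma Rel.trans (h : σ.Rel a b) (h' : σ.Rel b c) : σ.Rel a c :=
  ⟨h.1, h'.2.1, σ.1.trans h.2.2 h'.2.2⟩

lemma rel_coe (σ : NC k) (x y : Fin k) : σ.Rel x y ↔ σ.1.r x y :=
  ⟨fun ⟨_, _, h⟩ => h, fun h => ⟨x.2, y.2, h⟩⟩

lemma le_iff_rel : σ ≤ τ ↔ ∀ a b, σ.Rel a b → τ.Rel a b :=
  ⟨fun h _ _ ⟨ha, hb, hr⟩ => ⟨ha, hb, Setoid.le_def.mp h hr⟩,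
    fun h => Setoid.le_def.mpr fun {x y} hxy => (rel_coe τ x y).mp (h x y ⟨x.2, y.2, hxy⟩)⟩

lemma ext_rel (h : ∀ a b, σ.Rel a b ↔ τ.Rel a b) : σ = τ :=
  Subtype.ext <| Setoid.ext fun x y => by rw [← rel_coe, ← rel_coe, h]

lemma Rel.of_crossing {a b e f : ℕ} (hab : a < b) (hbe : b < e) (hef : e < f)
    (h₁ : σ.Rel a e) (h₂ : σ.Rel b f) : σ.Rel a b := by
  by_contra hn
  obtain ⟨ha, he, hae⟩ := h₁
  obtain ⟨hb, hf, hbf⟩ := h₂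
  exact σ.2 ⟨⟨a, ha⟩, ⟨b, hb⟩, ⟨e, he⟩, ⟨f, hf⟩, hab, hbe, hef, hae, hbf,
    fun h => hn ⟨ha, hb, h⟩⟩

end Rel

def ofRel (k : ℕ) (r : ℕ → ℕ → Prop) (refl : ∀ a < k, r a a) (symm : ∀ {a b}, r a b → r b a)
    (trans : ∀ {a b c}, r a b → r b c → r a c)
    (noncrossing : ∀ {a b e f}, a < b → b < e → e < f → f < k → r a e → r b f → r a b) :
    NC k :=
  ⟨⟨fun x y => r x y, ⟨fun x => refl x x.2, symm, trans⟩⟩,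
    fun ⟨_, _, _, l, hij, hjk, hkl, hik, hjl, hn⟩ => hn (noncrossing hij hjk hkl l.2 hik hjl)⟩

lemma rel_ofRel {r : ℕ → ℕ → Prop} {refl symm trans noncrossing} {a b : ℕ} :
    (ofRel k r refl symm trans noncrossing).Rel a b ↔ a < k ∧ b < k ∧ r a b :=
  ⟨fun ⟨ha, hb, h⟩ => ⟨ha, hb, h⟩, fun ⟨ha, hb, h⟩ => ⟨ha, hb, h⟩⟩

lemma rel_ncBot {a b : ℕ} : (ncBot k).Rel a b ↔ a = b ∧ a < k :=
  ⟨fun ⟨ha, _, h⟩ => ⟨congrArg Fin.val h, ha⟩, fun ⟨h, ha⟩ => h ▸ rel_refl _ ha⟩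

lemma ncBot_le (σ : NC k) : ncBot k ≤ σ :=
  le_iff_rel.mpr fun _ _ h => (rel_ncBot.mp h).1 ▸ rel_refl σ (rel_ncBot.mp h).2

lemma eq_ncBot_of_le_one (hk : k ≤ 1) (σ : NC k) : σ = ncBot k :=
  ext_rel fun a b => by
    rw [rel_ncBot]
    exact ⟨fun h => ⟨by have := h.lt_left; have := h.lt_right; omega, h.lt_left⟩,
      fun ⟨h, ha⟩ => h ▸ rel_refl σ ha⟩

lemma subsingleton_of_le_one (hk : k ≤ 1) : Subsingleton (NC k) :=
  ⟨fun σ τ => (eq_ncBot_of_le_one hk σ).trans (eq_ncBot_of_le_one hk τ).symm⟩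

def top (k : ℕ) : NC k :=
  ofRel k (fun _ _ => True) (fun _ _ => trivial) (fun _ => trivial) (fun _ _ => trivial)
    (fun _ _ _ _ _ _ => trivial)

lemma rel_top {a b : ℕ} : (top k).Rel a b ↔ a < k ∧ b < k := by
  simp [top, rel_ofRel]

lemma le_top (σ : NC k) : σ ≤ top k :=
  le_iff_rel.mpr fun _ _ h => rel_top.mpr ⟨h.lt_left, h.lt_right⟩

lemma ncBot_ne_top (hk : 2 ≤ k) : ncBot k ≠ top k := fun h => by
  have := rel_ncBot.mp (h ▸ rel_top.mpr ⟨by omega, by omega⟩ : (ncBot k).Rel 0 1)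
  omega

section Comap

variable {s m : ℕ} {f : ℕ → ℕ} (hf : StrictMono f) (hfs : ∀ i < s, f i < m)

def comap (σ : NC m) : NC s :=
  ofRel s (fun i j => σ.Rel (f i) (f j)) (fun i hi => rel_refl σ (hfs i hi)) Rel.symm Rel.trans
    fun hab hbe hef _ h₁ h₂ => Rel.of_crossing (hf hab) (hf hbe) (hf hef) h₁ h₂

variable {hf hfs}

lemma rel_comap {σ : NC m} {i j : ℕ} :
    (comap hf hfs σ).Rel i j ↔ i < s ∧ j < s ∧ σ.Rel (f i) (f j) :=
  rel_ofRel

lemma comap_mono {σ σ' : NC m} (h : σ ≤ σ') : comap hf hfs σ ≤ comap hf hfs σ' :=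
  le_iff_rel.mpr fun _ _ hr =>
    have ⟨hi, hj, hr⟩ := rel_comap.mp hr
    rel_comap.mpr ⟨hi, hj, le_iff_rel.mp h _ _ hr⟩

end Comap

/-! ### Inserting one partition into a gap of another -/

section Glue

def outPart (c : ℕ) {s u m : ℕ} (h₂ : m = s + u) (σ : NC m) : NC u :=
  comap skipGap_strictMono (fun _ => skipGap_lt (c := c) h₂) σ

variable {c s u m : ℕ} (h₁ : c ≤ u) (h₂ : m = s + u)

def midPart (σ : NC m) : NC s :=
  comap (f := (c + ·)) (fun _ _ h => by simpa using h) (fun _ _ => by omega) σ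

def IsBlockUnion (c s : ℕ) (σ : NC m) : Prop :=
  ∀ a b, c ≤ a → a < c + s → σ.Rel a b → c ≤ b ∧ b < c + s

/-- The points of `[c, c + s)` carry `τ`, the others carry `γ`, and no block meets both. -/
def glue (τ : NC s) (γ : NC u) : NC m :=
  ofRel m (fun a b => (c ≤ a ∧ c ≤ b ∧ τ.Rel (a - c) (b - c)) ∨
      ((a < c ∨ c + s ≤ a) ∧ (b < c ∨ c + s ≤ b) ∧ γ.Rel (unskipGap c s a) (unskipGap c s b)))
    (fun a ha => by
      by_cases hmid : c ≤ a ∧ a < c + s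
      · exact Or.inl ⟨hmid.1, hmid.1, rel_refl τ (by omega)⟩
      · exact Or.inr ⟨by omega, by omega, rel_refl γ (unskipGap_lt h₁ h₂ ha (by omega))⟩)
    (fun h => h.imp (fun ⟨ha, hb, h⟩ => ⟨hb, ha, h.symm⟩) fun ⟨ha, hb, h⟩ => ⟨hb, ha, h.symm⟩)
    (by
      rintro a b e (⟨ha, hb, h⟩ | ⟨ha, hb, h⟩) (⟨hb', he, h'⟩ | ⟨hb', he, h'⟩)
      · exact Or.inl ⟨ha, he, h.trans h'⟩
      · have := h.lt_right; omega
      · have := h'.lt_left; omega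
      · exact Or.inr ⟨ha, he, h.trans h'⟩)
    (by
      rintro a b e f hab hbe hef - (⟨ha, he, hae⟩ | ⟨ha, he, hae⟩) (⟨hb, hf, hbf⟩ | ⟨hb, hf, hbf⟩)
      · have := hae.lt_left; have := hbf.lt_right
        exact Or.inl ⟨ha, hb, Rel.of_crossing (by omega) (by omega) (by omega) hae hbf⟩
      · have := hae.lt_right; omega
      · have := hbf.lt_right; omega
      · exact Or.inr ⟨ha, hb, Rel.of_crossing (unskipGap_lt_unskipGap ha hb hab)
          (unskipGap_lt_unskipGap hb he hbe) (unskipGap_lt_unskipGap he hf hef) hae hbf⟩)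

variable {h₁ h₂}

lemma rel_midPart {σ : NC m} {i j : ℕ} :
    (midPart h₁ h₂ σ).Rel i j ↔ i < s ∧ j < s ∧ σ.Rel (c + i) (c + j) :=
  rel_comap

lemma rel_outPart {σ : NC m} {i j : ℕ} :
    (outPart c h₂ σ).Rel i j ↔ i < u ∧ j < u ∧ σ.Rel (skipGap c s i) (skipGap c s j) :=
  rel_comap

lemma rel_glue {τ : NC s} {γ : NC u} {a b : ℕ} :
    (glue h₁ h₂ τ γ).Rel a b ↔ a < m ∧ b < m ∧ ((c ≤ a ∧ c ≤ b ∧ τ.Rel (a - c) (b - c)) ∨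
      ((a < c ∨ c + s ≤ a) ∧ (b < c ∨ c + s ≤ b) ∧
        γ.Rel (unskipGap c s a) (unskipGap c s b))) :=
  rel_ofRel

variable (h₁ h₂)

lemma midPart_glue (τ : NC s) (γ : NC u) : midPart h₁ h₂ (glue h₁ h₂ τ γ) = τ := by
  refine ext_rel fun a b => ?_
  simp only [rel_midPart, rel_glue, Nat.add_sub_cancel_left]
  constructor
  · rintro ⟨ha, -, -, -, ⟨-, -, h⟩ | ⟨hout, -⟩⟩
    · exact h
    · omega
  · intro h
    have := h.lt_left; have := h.lt_right
    exact ⟨‹_›, ‹_›, by omega, by omega, Or.inl ⟨by omega, by omega, h⟩⟩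

lemma outPart_glue (τ : NC s) (γ : NC u) : outPart c h₂ (glue h₁ h₂ τ γ) = γ := by
  refine ext_rel fun a b => ?_
  simp only [rel_outPart, rel_glue, unskipGap_skipGap]
  have ha := skipGap_notMem_gap (c := c) (s := s) a
  have hb := skipGap_notMem_gap (c := c) (s := s) b
  constructor
  · rintro ⟨-, -, -, -, ⟨hca, -, h⟩ | ⟨-, -, h⟩⟩
    · have := h.lt_left; omega
    · exact h
  · intro h
    have := h.lt_left; have := h.lt_right
    exact ⟨‹_›, ‹_›, skipGap_lt h₂ ‹_›, skipGap_lt h₂ ‹_›, Or.inr ⟨ha, hb, h⟩⟩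

lemma glue_midPart_outPart {σ : NC m} (hσ : IsBlockUnion c s σ) :
    glue h₁ h₂ (midPart h₁ h₂ σ) (outPart c h₂ σ) = σ := by
  refine ext_rel fun a b => ?_
  simp only [rel_glue, rel_midPart, rel_outPart]
  constructor
  · rintro ⟨-, -, ⟨hca, hcb, -, -, h⟩ | ⟨ha, hb, -, -, h⟩⟩
    · rwa [Nat.add_sub_cancel' hca, Nat.add_sub_cancel' hcb] at h
    · rwa [skipGap_unskipGap ha, skipGap_unskipGap hb] at h
  · intro h
    have ha := h.lt_left; have hb := h.lt_right
    refine ⟨ha, hb, ?_⟩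
    by_cases hmid : c ≤ a ∧ a < c + s
    · have := hσ a b hmid.1 hmid.2 h
      refine Or.inl ⟨hmid.1, this.1, by omega, by omega, ?_⟩
      rwa [Nat.add_sub_cancel' hmid.1, Nat.add_sub_cancel' this.1]
    · have hb' : b < c ∨ c + s ≤ b := by
        by_contra hb'
        have := hσ b a (by omega) (by omega) h.symm
        omega
      refine Or.inr ⟨by omega, hb', unskipGap_lt h₁ h₂ ha (by omega), unskipGap_lt h₁ h₂ hb hb', ?_⟩
      rwa [skipGap_unskipGap (by omega), skipGap_unskipGap hb']

lemma glue_mono {τ τ' : NC s} {γ γ' : NC u} (hτ : τ ≤ τ') (hγ : γ ≤ γ') :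
    glue h₁ h₂ τ γ ≤ glue h₁ h₂ τ' γ' := by
  refine le_iff_rel.mpr fun a b => ?_
  simp only [rel_glue]
  rintro ⟨ha, hb, ⟨hca, hcb, h⟩ | ⟨hoa, hob, h⟩⟩
  · exact ⟨ha, hb, Or.inl ⟨hca, hcb, le_iff_rel.mp hτ _ _ h⟩⟩
  · exact ⟨ha, hb, Or.inr ⟨hoa, hob, le_iff_rel.mp hγ _ _ h⟩⟩

lemma le_glue_iff {τ : NC s} {γ : NC u} {σ : NC m} :
    σ ≤ glue h₁ h₂ τ γ ↔ IsBlockUnion c s σ ∧ midPart h₁ h₂ σ ≤ τ ∧ outPart c h₂ σ ≤ γ := by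
  refine ⟨fun h => ⟨fun a b hca has hab => ?_, ?_, ?_⟩, fun ⟨hσ, hτ, hγ⟩ => ?_⟩
  · obtain ⟨-, -, ⟨-, hcb, h⟩ | ⟨ha, -⟩⟩ := rel_glue.mp (le_iff_rel.mp h a b hab)
    · have := h.lt_right; omega
    · omega
  · rw [← midPart_glue h₁ h₂ τ γ]
    exact comap_mono h
  · rw [← outPart_glue h₁ h₂ τ γ]
    exact comap_mono h
  · rw [← glue_midPart_outPart h₁ h₂ hσ]
    exact glue_mono h₁ h₂ hτ hγ

lemma glue_inj {τ τ' : NC s} {γ γ' : NC u} :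
    glue h₁ h₂ τ γ = glue h₁ h₂ τ' γ' ↔ τ = τ' ∧ γ = γ' := by
  refine ⟨fun h => ⟨?_, ?_⟩, fun ⟨hτ, hγ⟩ => hτ ▸ hγ ▸ rfl⟩
  · rw [← midPart_glue h₁ h₂ τ γ, h, midPart_glue]
  · rw [← outPart_glue h₁ h₂ τ γ, h, outPart_glue]

lemma glue_ncBot : glue h₁ h₂ (ncBot s) (ncBot u) = ncBot m := by
  refine ext_rel fun a b => ?_
  simp only [rel_glue, rel_ncBot]
  constructor
  · rintro ⟨ha, -, ⟨hca, hcb, h, -⟩ | ⟨hoa, hob, h, -⟩⟩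
    · omega
    · exact ⟨by rw [← skipGap_unskipGap hoa, h, skipGap_unskipGap hob], ha⟩
  · rintro ⟨rfl, ha⟩
    refine ⟨ha, ha, ?_⟩
    by_cases hmid : c ≤ a ∧ a < c + s
    · exact Or.inl ⟨hmid.1, hmid.1, rfl, by omega⟩
    · exact Or.inr ⟨by omega, by omega, rfl, unskipGap_lt h₁ h₂ ha (by omega)⟩

lemma sum_filter_eq_sum_glue [Fintype (NC s)] [Fintype (NC u)] [Fintype (NC m)] {M : Type*}
    [AddCommMonoid M] {P : NC m → Prop} {T : NC s → Prop} {G : NC u → Prop}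
    [DecidablePred P] [DecidablePred T] [DecidablePred G]
    (hP : ∀ σ, P σ → IsBlockUnion c s σ ∧ T (midPart h₁ h₂ σ) ∧ G (outPart c h₂ σ))
    (hglue : ∀ τ γ, T τ → G γ → P (glue h₁ h₂ τ γ)) (F : NC m → M) :
    ∑ σ ∈ univ.filter P, F σ = ∑ τ ∈ univ.filter T, ∑ γ ∈ univ.filter G, F (glue h₁ h₂ τ γ) := by
  rw [← sum_product']
  refine sum_nbij' (fun σ => (midPart h₁ h₂ σ, outPart c h₂ σ)) (fun p => glue h₁ h₂ p.1 p.2)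
    (fun σ hσ => ?_) (fun p hp => ?_) (fun σ hσ => ?_) (fun p _ => ?_) (fun σ hσ => ?_)
  · simpa using (hP σ (mem_filter.mp hσ).2).2
  · simp only [mem_product, mem_filter, mem_univ, true_and] at hp
    simpa using hglue _ _ hp.1 hp.2
  · exact glue_midPart_outPart h₁ h₂ (hP σ (mem_filter.mp hσ).2).1
  · rw [midPart_glue, outPart_glue]
  · rw [glue_midPart_outPart h₁ h₂ (hP σ (mem_filter.mp hσ).2).1]

end Glue

lemma ncBlocks_eq_card {β : Type*} (σ : NC k) (f : Fin k → β) (hf : Function.Surjective f)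
    (h : ∀ x y, σ.1.r x y ↔ f x = f y) : ncBlocks σ = Nat.card β := by
  have hker : σ.1 = Setoid.ker f := Setoid.ext fun x y => (h x y).trans Setoid.ker_def.symm
  rw [ncBlocks, hker]
  exact Nat.card_congr (Setoid.quotientKerEquivOfSurjective f hf)

lemma one_le_ncBlocks (hk : 1 ≤ k) (σ : NC k) : 1 ≤ ncBlocks σ :=
  have : Nonempty (Quotient σ.1) := ⟨⟦⟨0, hk⟩⟧⟩
  Nat.card_pos

lemma ncBlocks_le (σ : NC k) : ncBlocks σ ≤ k := by
  simpa [ncBlocks] using Nat.card_le_card_of_surjective _ (Quotient.mk_surjective (s := σ.1))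

lemma ncBlocks_ncBot (k : ℕ) : ncBlocks (ncBot k) = k := by
  rw [ncBlocks_eq_card _ id Function.surjective_id fun _ _ => Iff.rfl, Nat.card_eq_fintype_card,
    Fintype.card_fin]

lemma ncBlocks_top (hk : 1 ≤ k) : ncBlocks (top k) = 1 := by
  rw [ncBlocks_eq_card _ (fun _ => ()) (fun _ => ⟨⟨0, hk⟩, rfl⟩)
    fun x y => iff_of_true ((rel_coe _ x y).mp (rel_top.mpr ⟨x.2, y.2⟩)) rfl, Nat.card_unique]

lemma ncBlocks_glue {c s u m : ℕ} (h₁ : c ≤ u) (h₂ : m = s + u) (τ : NC s) (γ : NC u) :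
    ncBlocks (glue h₁ h₂ τ γ) = ncBlocks τ + ncBlocks γ := by
  let block : Fin m → Quotient τ.1 ⊕ Quotient γ.1 := fun x =>
    if hx : c ≤ x.1 ∧ x.1 < c + s then .inl ⟦⟨x - c, by omega⟩⟧
    else .inr ⟦⟨unskipGap c s x, unskipGap_lt h₁ h₂ x.2 (by omega)⟩⟧
  have hsurj : Function.Surjective block := by
    rintro (q | q) <;> obtain ⟨i, rfl⟩ := Quotient.mk_surjective q
    · exact ⟨⟨c + i, by omega⟩, by simp [block]⟩
    · refine ⟨⟨skipGap c s i, skipGap_lt h₂ i.2⟩, ?_⟩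
      have := skipGap_notMem_gap (c := c) (s := s) i
      simp only [block, dif_neg (show ¬(c ≤ skipGap c s i ∧ skipGap c s i < c + s) by omega),
        unskipGap_skipGap]
  rw [ncBlocks_eq_card _ block hsurj, Nat.card_sum]
  · rfl
  intro x y
  rw [← rel_coe, rel_glue]
  simp only [block]
  by_cases hx : c ≤ x.1 ∧ x.1 < c + s <;> by_cases hy : c ≤ y.1 ∧ y.1 < c + s
  · simp only [dif_pos hx, dif_pos hy, Sum.inl.injEq, Quotient.eq, ← rel_coe]
    exact ⟨fun ⟨_, _, h⟩ => (h.resolve_right (by omega)).2.2,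
      fun h => ⟨x.2, y.2, .inl ⟨hx.1, hy.1, h⟩⟩⟩
  · simp only [dif_pos hx, dif_neg hy, reduceCtorEq, iff_false]
    rintro ⟨-, -, ⟨-, hcy, h⟩ | ⟨hox, -, -⟩⟩
    · have := h.lt_right; omega
    · omega
  · simp only [dif_neg hx, dif_pos hy, reduceCtorEq, iff_false]
    rintro ⟨-, -, ⟨hcx, -, h⟩ | ⟨-, hoy, -⟩⟩
    · have := h.lt_left; omega
    · omega
  · simp only [dif_neg hx, dif_neg hy, Sum.inr.injEq, Quotient.eq, ← rel_coe]
    refine ⟨fun ⟨_, _, h⟩ => (h.resolve_left fun ⟨hcx, _, h⟩ => ?_).2.2,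
      fun h => ⟨x.2, y.2, .inr ⟨by omega, by omega, h⟩⟩⟩
    have := h.lt_left; omega

/-! ### The Möbius function from `⊥` -/

section Mobius

def IsMobiusFunction (mu : ∀ k, NC k → NC k → ℤ) [∀ k, Fintype (NC k)] : Prop :=
  ∀ k, ∀ a b : NC k, a ≤ b →
    (∑ c ∈ Finset.univ.filter (fun c => a ≤ c ∧ c ≤ b), mu k a c) = if a = b then 1 else 0

variable {mu : ∀ k, NC k → NC k → ℤ} [∀ k, Fintype (NC k)]

lemma sum_filter_le_mu_ncBot (hmu : IsMobiusFunction mu) (b : NC k) :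
    ∑ c ∈ univ.filter (· ≤ b), mu k (ncBot k) c = if ncBot k = b then 1 else 0 := by
  rw [← hmu k _ b (ncBot_le b)]
  simp [ncBot_le]

lemma mu_ncBot_ncBot (hmu : IsMobiusFunction mu) (k : ℕ) : mu k (ncBot k) (ncBot k) = 1 := by
  have h := sum_filter_le_mu_ncBot hmu (ncBot k)
  rwa [show univ.filter (· ≤ ncBot k) = {ncBot k} by
    ext c; simpa using ⟨fun h => le_antisymm h (ncBot_le c), fun h => h ▸ le_rfl⟩,
    sum_singleton, if_pos rfl] at h

lemma sum_mu_ncBot (hmu : IsMobiusFunction mu) (hk : 2 ≤ k) :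
    ∑ σ : NC k, mu k (ncBot k) σ = 0 := by
  have h := sum_filter_le_mu_ncBot hmu (top k)
  rwa [if_neg (ncBot_ne_top hk), filter_true_of_mem fun σ _ => le_top σ] at h

/-- Below `glue τ γ` the lattice is the product of the intervals below `τ` and below `γ`. -/
lemma mu_glue (hmu : IsMobiusFunction mu) {c s u m : ℕ} (h₁ : c ≤ u) (h₂ : m = s + u)
    (τ : NC s) (γ : NC u) :
    mu m (ncBot m) (glue h₁ h₂ τ γ) = mu s (ncBot s) τ * mu u (ncBot u) γ := by
  have key := eq_of_forall_sum_filter_le_eq (f := mu m (ncBot m))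
    (g := fun σ => mu s (ncBot s) (midPart h₁ h₂ σ) * mu u (ncBot u) (outPart c h₂ σ))
    (b := glue h₁ h₂ τ γ) ?_ _ le_rfl
  · rwa [midPart_glue, outPart_glue] at key
  intro b hb
  obtain ⟨τ', γ', rfl⟩ : ∃ τ' γ', b = glue h₁ h₂ τ' γ' :=
    ⟨_, _, (glue_midPart_outPart h₁ h₂ ((le_glue_iff h₁ h₂).mp hb).1).symm⟩
  rw [sum_filter_le_mu_ncBot hmu, sum_filter_eq_sum_glue h₁ h₂ (T := (· ≤ τ')) (G := (· ≤ γ'))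
    (fun σ => (le_glue_iff h₁ h₂).mp) (fun _ _ hτ hγ => glue_mono h₁ h₂ hτ hγ)]
  simp only [midPart_glue, outPart_glue, ← sum_mul_sum, sum_filter_le_mu_ncBot hmu,
    ← glue_ncBot h₁ h₂, glue_inj, ite_zero_mul_ite_zero, mul_one]

end Mobius

/-! ### Decomposition along the block of the last point -/

def TailInBlock {m : ℕ} (r : ℕ) (σ : NC m) : Prop :=
  ∀ a, m - r ≤ a → a < m → σ.Rel a (m - 1)

/-- One more than the largest point below the last `r` points in the block of the last point,
or `0` if there is none. -/
noncomputable def lastGap {m : ℕ} (r : ℕ) (σ : NC m) : ℕ :=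
  Nat.findGreatest (fun j => 0 < j ∧ σ.Rel (j - 1) (m - 1)) (m - r)

section LastGap

variable {m r : ℕ} {σ : NC m}

lemma lastGap_le : lastGap r σ ≤ m - r := Nat.findGreatest_le _

lemma lastGap_eq_zero_iff : lastGap r σ = 0 ↔ ∀ a < m - r, ¬σ.Rel a (m - 1) := by
  rw [lastGap, Nat.findGreatest_eq_zero_iff]
  exact ⟨fun h a ha hr => h (Nat.succ_pos a) ha ⟨Nat.succ_pos a, hr⟩,
    fun h j hj hjm ⟨_, hr⟩ => h (j - 1) (by omega) hr⟩

lemma lastGap_eq_succ_iff {j : ℕ} : lastGap r σ = j + 1 ↔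
    j < m - r ∧ σ.Rel j (m - 1) ∧ ∀ a, j < a → a < m - r → ¬σ.Rel a (m - 1) := by
  rw [lastGap, Nat.findGreatest_eq_iff]
  refine ⟨fun ⟨_, hrel, hmax⟩ => ⟨by omega, (hrel (by omega)).2, fun a ha ham hr =>
    hmax (n := a + 1) (by omega) (by omega) ⟨by omega, hr⟩⟩, fun ⟨hj, hrel, hmax⟩ =>
    ⟨by omega, fun _ => ⟨by omega, hrel⟩, fun a ha ham ⟨_, hr⟩ =>
      hmax (a - 1) (by omega) (by omega) hr⟩⟩

end LastGap

section TailDecomposition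

variable {r : ℕ}

lemma TailInBlock.isBlockUnion_of_lastGap_eq_zero {σ : NC (k + r)} (ht : TailInBlock r σ)
    (hg : lastGap r σ = 0) : IsBlockUnion k r σ := fun a b hka hak hab => by
  have hb := hab.lt_right
  refine ⟨by_contra fun hbk => lastGap_eq_zero_iff.mp hg b (by omega) ?_, by omega⟩
  exact hab.symm.trans (ht a (by omega) (by omega))

lemma TailInBlock.midPart_eq_top {σ : NC (k + r)} (ht : TailInBlock r σ) :
    midPart le_rfl (add_comm k r) σ = top r :=
  ext_rel fun a b => by
    rw [rel_midPart, rel_top]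
    exact ⟨fun h => ⟨h.1, h.2.1⟩, fun ⟨ha, hb⟩ =>
      ⟨ha, hb, (ht _ (by omega) (by omega)).trans (ht _ (by omega) (by omega)).symm⟩⟩

lemma tailInBlock_glue_top (γ : NC k) : TailInBlock r (glue le_rfl (add_comm k r) (top r) γ) := by
  intro a ha ham
  exact rel_glue.mpr ⟨ham, by omega, .inl ⟨by omega, by omega, rel_top.mpr ⟨by omega, by omega⟩⟩⟩

lemma lastGap_glue_top (hr : 1 ≤ r) (γ : NC k) :
    lastGap r (glue le_rfl (add_comm k r) (top r) γ) = 0 := by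
  refine lastGap_eq_zero_iff.mpr fun a ha hrel => ?_
  obtain ⟨-, -, ⟨hka, -⟩ | ⟨-, hout, -⟩⟩ := rel_glue.mp hrel <;> omega

variable {j : ℕ} (h₂ : k + r = (k - 1 - j) + (j + (r + 1)))

lemma TailInBlock.isBlockUnion_of_lastGap_eq_succ (hr : 1 ≤ r) {σ : NC (k + r)}
    (ht : TailInBlock r σ) (hg : lastGap r σ = j + 1) : IsBlockUnion (j + 1) (k - 1 - j) σ := by
  obtain ⟨hjk, hj, hmax⟩ := lastGap_eq_succ_iff.mp hg
  intro a b hja hak hab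
  have hb := hab.lt_right
  by_contra hout
  refine hmax a (by omega) (by omega) (hab.trans ?_)
  rcases lt_trichotomy b j with hbj | rfl | hjb
  · exact (Rel.of_crossing hbj (by omega) (by omega) hab.symm hj).trans hj
  · exact hj
  · exact ht b (by omega) (by omega)

lemma TailInBlock.outPart_of_lastGap_eq_succ (hr : 1 ≤ r) {σ : NC (k + r)}
    (ht : TailInBlock r σ) (hg : lastGap r σ = j + 1) :
    TailInBlock (r + 1) (outPart (j + 1) h₂ σ) := by
  obtain ⟨-, hj, -⟩ := lastGap_eq_succ_iff.mp hg
  intro a ha hau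
  refine rel_outPart.mpr ⟨hau, by omega, ?_⟩
  rw [show skipGap (j + 1) (k - 1 - j) (j + (r + 1) - 1) = k + r - 1 by
    unfold skipGap; split_ifs <;> omega]
  unfold skipGap
  split_ifs
  · obtain rfl : a = j := by omega
    exact hj
  · exact ht _ (by omega) (by omega)

lemma unskipGap_last (hjk : j < k) :
    unskipGap (j + 1) (k - 1 - j) (k + r - 1) = j + (r + 1) - 1 := by
  unfold unskipGap; split_ifs <;> omega

variable (h₁ : j + 1 ≤ j + (r + 1)) {τ : NC (k - 1 - j)} {γ : NC (j + (r + 1))}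

lemma tailInBlock_glue (hγ : TailInBlock (r + 1) γ) :
    TailInBlock r (glue h₁ h₂ τ γ) := by
  intro a ha ham
  refine rel_glue.mpr ⟨ham, by omega, .inr ⟨by omega, by omega, ?_⟩⟩
  rw [unskipGap_last (by omega)]
  exact hγ _ (by unfold unskipGap; split_ifs <;> omega) (by unfold unskipGap; split_ifs <;> omega)

lemma lastGap_glue (hr : 1 ≤ r) (hγ : TailInBlock (r + 1) γ) :
    lastGap r (glue h₁ h₂ τ γ) = j + 1 := by
  refine lastGap_eq_succ_iff.mpr ⟨by omega, ?_, fun a hja hak hrel => ?_⟩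
  · refine rel_glue.mpr ⟨by omega, by omega, .inr ⟨by omega, by omega, ?_⟩⟩
    rw [unskipGap_last (by omega), show unskipGap (j + 1) (k - 1 - j) j = j by
      unfold unskipGap; split_ifs <;> omega]
    exact hγ j (by omega) (by omega)
  · obtain ⟨-, -, ⟨-, -, h⟩ | ⟨hout, -⟩⟩ := rel_glue.mp hrel
    · have := h.lt_right; omega
    · omega

end TailDecomposition

/-! ### Generating functions -/

section Weights

open Polynomial

variable (mu : ∀ k, NC k → NC k → ℤ)

noncomputable def blockWeight (σ : NC k) : ℤ[X] :=
  C (mu k (ncBot k) σ) * X ^ ncBlocks σ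

lemma blockWeight_top (hk : 1 ≤ k) : blockWeight mu (top k) = C (mu k (ncBot k) (top k)) * X := by
  rw [blockWeight, ncBlocks_top hk, pow_one]

variable [∀ k, Fintype (NC k)]

noncomputable def blockPoly (k : ℕ) : ℤ[X] :=
  ∑ σ : NC k, blockWeight mu σ

noncomputable def tailPoly (r k : ℕ) : ℤ[X] :=
  ∑ σ ∈ univ.filter (TailInBlock (m := k + r) r), blockWeight mu σ

variable {mu}

lemma sum_filter_blockWeight_glue (hmu : IsMobiusFunction mu) {c s u m : ℕ} (h₁ : c ≤ u)
    (h₂ : m = s + u) {P : NC m → Prop} {T : NC s → Prop} {G : NC u → Prop}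
    [DecidablePred P] [DecidablePred T] [DecidablePred G]
    (hP : ∀ σ, P σ → IsBlockUnion c s σ ∧ T (midPart h₁ h₂ σ) ∧ G (outPart c h₂ σ))
    (hglue : ∀ τ γ, T τ → G γ → P (glue h₁ h₂ τ γ)) :
    ∑ σ ∈ univ.filter P, blockWeight mu σ =
      (∑ τ ∈ univ.filter T, blockWeight mu τ) * ∑ γ ∈ univ.filter G, blockWeight mu γ := by
  rw [sum_filter_eq_sum_glue h₁ h₂ hP hglue, sum_mul_sum]
  refine sum_congr rfl fun τ _ => sum_congr rfl fun γ _ => ?_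
  simp only [blockWeight, mu_glue hmu, ncBlocks_glue, map_mul, pow_add]
  ring

/-- Sort by `lastGap`. If the block of the last point is exactly the tail, removing it leaves an
arbitrary partition. Otherwise, if `j` is the largest other point of that block, the points
strictly between `j` and the tail form an arbitrary partition, and removing them leaves one whose
last `r + 1` points share a block. -/
lemma tailPoly_eq (hmu : IsMobiusFunction mu) {r : ℕ} (hr : 1 ≤ r) (k : ℕ) :
    tailPoly mu r k = C (mu r (ncBot r) (top r)) * X * blockPoly mu k +
      ∑ j ∈ range k, tailPoly mu (r + 1) j * blockPoly mu (k - 1 - j) := by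
  rw [tailPoly, ← sum_fiberwise_of_maps_to (g := lastGap r) (t := range (k + 1))
    fun σ _ => mem_range.mpr (Nat.lt_succ_of_le (lastGap_le.trans (by omega))), sum_range_succ',
    add_comm]
  simp only [filter_filter]
  congr 1
  · rw [sum_filter_blockWeight_glue hmu le_rfl (add_comm k r) (T := (· = top r))
      (G := fun _ => True) (fun σ ⟨ht, hg⟩ => ⟨ht.isBlockUnion_of_lastGap_eq_zero hg,
        ht.midPart_eq_top, trivial⟩)
      (fun τ γ hτ _ => hτ ▸ ⟨tailInBlock_glue_top γ, lastGap_glue_top hr γ⟩),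
      show univ.filter (· = top r) = {top r} by ext; simp, sum_singleton, blockWeight_top mu hr,
      filter_true, blockPoly]
  · refine sum_congr rfl fun j hj => ?_
    have h₂ : k + r = (k - 1 - j) + (j + (r + 1)) := by have := mem_range.mp hj; omega
    rw [sum_filter_blockWeight_glue hmu (by omega : j + 1 ≤ j + (r + 1)) h₂
      (T := fun _ => True) (G := TailInBlock (r + 1))
      (fun σ ⟨ht, hg⟩ => ⟨ht.isBlockUnion_of_lastGap_eq_succ hr hg, trivial,
        ht.outPart_of_lastGap_eq_succ h₂ hr hg⟩)
      (fun τ γ _ hγ => ⟨tailInBlock_glue h₂ _ hγ, lastGap_glue h₂ _ hr hγ⟩),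
      mul_comm, filter_true, tailPoly, blockPoly]

lemma blockPoly_succ (k : ℕ) : blockPoly mu (k + 1) = tailPoly mu 1 k := by
  rw [tailPoly, filter_true_of_mem fun σ _ a ha hak => by
    obtain rfl : a = k + 1 - 1 := by omega
    exact rel_refl σ hak]
  rfl

lemma blockPoly_zero (hmu : IsMobiusFunction mu) : blockPoly mu 0 = 1 := by
  have := subsingleton_of_le_one zero_le_one
  rw [blockPoly, Fintype.sum_subsingleton _ (ncBot 0), blockWeight, mu_ncBot_ncBot hmu,
    ncBlocks_ncBot]
  simp

lemma ncChi_one (hmu : IsMobiusFunction mu) : ncChi mu 1 = 1 := by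
  have := subsingleton_of_le_one le_rfl
  rw [ncChi, Fintype.sum_subsingleton _ (ncBot 1), mu_ncBot_ncBot hmu, ncBlocks_ncBot]
  simp

lemma blockPoly_eq_X_mul_ncChi (hk : 1 ≤ k) : blockPoly mu k = X * ncChi mu k := by
  rw [blockPoly, ncChi, mul_sum]
  refine sum_congr rfl fun σ _ => ?_
  have h₁ := one_le_ncBlocks hk σ
  have h₂ := ncBlocks_le σ
  rw [blockWeight, mul_left_comm, ← pow_succ']
  congr 2
  omega

lemma eval_one_blockPoly (hmu : IsMobiusFunction mu) (hk : 2 ≤ k) :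
    (blockPoly mu k).eval 1 = 0 := by
  simp [blockPoly, blockWeight, eval_finsetSum, sum_mu_ncBot hmu hk]

end Weights

section Series

open PowerSeries
open scoped Polynomial

variable (mu : ∀ k, NC k → NC k → ℤ) [∀ k, Fintype (NC k)]

noncomputable def blockSeries : ℤ[X]⟦X⟧ := mk (blockPoly mu)

noncomputable def tailSeries (r : ℕ) : ℤ[X]⟦X⟧ := mk (tailPoly mu r)

noncomputable def topMobiusSeries : ℤ⟦X⟧ := mk fun r => mu (r + 1) (ncBot (r + 1)) (top (r + 1))

noncomputable def chiSeries : ℤ[X]⟦X⟧ :=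
  (map Polynomial.C (X * topMobiusSeries mu)).subst (X * blockSeries mu)

variable {mu}

lemma constantCoeff_X_mul_blockSeries : constantCoeff (X * blockSeries mu) = 0 := by
  simp

lemma tailSeries_eq (hmu : IsMobiusFunction mu) {r : ℕ} (hr : 1 ≤ r) :
    tailSeries mu r = C (Polynomial.C (mu r (ncBot r) (top r)) * Polynomial.X) * blockSeries mu +
      X * tailSeries mu (r + 1) * blockSeries mu := by
  ext k
  rw [map_add, coeff_C_mul, mul_assoc X, tailSeries, coeff_mk, tailPoly_eq hmu hr, blockSeries,
    coeff_mk]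
  congr 1
  rcases k with _ | k
  · simp
  · rw [coeff_succ_X_mul, coeff_mul, Nat.sum_antidiagonal_eq_sum_range_succ_mk]
    simp [tailSeries]

lemma blockSeries_eq (hmu : IsMobiusFunction mu) :
    blockSeries mu = 1 + C Polynomial.X * chiSeries mu := by
  have hw := HasSubst.of_constantCoeff_zero' (constantCoeff_X_mul_blockSeries (mu := mu))
  have hB : blockSeries mu = 1 + X * tailSeries mu 1 := by
    ext (_ | k)
    · simp [blockSeries, blockPoly_zero hmu]
    · simp [blockSeries, tailSeries, blockPoly_succ]
  have h := eq_mul_subst_of_forall_eq_mul_add constantCoeff_X_mul_blockSeries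
    (fun r => Polynomial.C (mu (r + 1) (ncBot (r + 1)) (top (r + 1))) * Polynomial.X)
    (S := fun r => X * tailSeries mu (r + 1))
    (fun r => by rw [tailSeries_eq hmu (by omega : 1 ≤ r + 1)]; ring)
  have hmk : (mk fun r => Polynomial.C (mu (r + 1) (ncBot (r + 1)) (top (r + 1))) * Polynomial.X) =
      C Polynomial.X * map Polynomial.C (topMobiusSeries mu) := by
    ext r
    simp [topMobiusSeries, mul_comm]
  rw [zero_add] at h
  calc blockSeries mu = 1 + X * tailSeries mu 1 := hB
    _ = _ := by
      rw [h, hmk, chiSeries, map_mul, map_X]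
      simp only [subst_mul hw, subst_X hw, subst_C, ← C_apply]
      ring

lemma map_eval_one_blockSeries (hmu : IsMobiusFunction mu) :
    map (Polynomial.evalRingHom 1) (blockSeries mu) = 1 + X := by
  ext (_ | _ | k)
  · simp [blockSeries, blockPoly_zero hmu]
  · simp [blockSeries, blockPoly_eq_X_mul_ncChi, ncChi_one hmu]
  · simp [blockSeries, eval_one_blockPoly hmu (by omega : 2 ≤ k + 2), coeff_X]

lemma X_mul_topMobiusSeries_add_sq (hmu : IsMobiusFunction mu) :
    X * topMobiusSeries mu + (X * topMobiusSeries mu) ^ 2 = X := by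
  have hP₀ : constantCoeff (X + X ^ 2 : ℤ⟦X⟧) = 0 := by simp
  have hP := HasSubst.of_constantCoeff_zero' hP₀
  have hU : (X * topMobiusSeries mu).subst (X + X ^ 2 : ℤ⟦X⟧) = X := by
    have hC : ∀ f : ℤ⟦X⟧, map (Polynomial.evalRingHom 1) (map Polynomial.C f) = f := fun f => by
      ext; simp
    have h := congrArg (map (Polynomial.evalRingHom 1)) (blockSeries_eq hmu)
    rw [chiSeries, map_add, map_one, map_mul, map_C,
      map_subst_of_constantCoeff_eq_zero _ constantCoeff_X_mul_blockSeries, hC, map_mul, map_X,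
      map_eval_one_blockSeries hmu] at h
    simpa [mul_add, ← sq] using h.symm
  refine eq_of_subst_eq_subst hP₀ (by simp) ?_
  rw [subst_add hP, subst_pow hP, hU, subst_X hP]

lemma chiSeries_add_sq (hmu : IsMobiusFunction mu) :
    chiSeries mu + chiSeries mu ^ 2 = X * blockSeries mu := by
  have hw := HasSubst.of_constantCoeff_zero' (constantCoeff_X_mul_blockSeries (mu := mu))
  rw [chiSeries, ← subst_pow hw, ← subst_add hw, ← map_pow, ← map_add,
    X_mul_topMobiusSeries_add_sq hmu, map_X, subst_X hw]

lemma constantCoeff_chiSeries : constantCoeff (chiSeries mu) = 0 :=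
  constantCoeff_subst_eq_zero constantCoeff_X_mul_blockSeries _ (by simp)

lemma coeff_chiSeries (hmu : IsMobiusFunction mu) {k : ℕ} (hk : 1 ≤ k) :
    coeff k (chiSeries mu) = ncChi mu k := by
  refine mul_left_cancel₀ (Polynomial.X_ne_zero (R := ℤ)) ?_
  have h := congrArg (coeff k) (blockSeries_eq hmu)
  rw [blockSeries, coeff_mk, map_add, coeff_one, if_neg (by omega), zero_add, coeff_C_mul,
    blockPoly_eq_X_mul_ncChi hk] at h
  exact h.symm

end Series

end NC

open scoped Classical in
open Polynomial in
/-- The characteristic polynomials of the non-crossing partition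
lattices satisfy χ(NC_1,t) = 1 and, for n ≥ 2,
χ(NC_n,t) = t·χ(NC_{n−1},t) − Σ_{i=1}^{n−1} χ(NC_i,t)·χ(NC_{n−i},t). -/
theorem ncChi_recurrence (mu : ∀ k, NC k → NC k → ℤ) [∀ k, Fintype (NC k)]
    (hmu : ∀ k, ∀ a b : NC k, a ≤ b →
      (∑ c ∈ Finset.univ.filter (fun c => a ≤ c ∧ c ≤ b), mu k a c) =
        if a = b then 1 else 0)
    (n : ℕ) (hn : 2 ≤ n) :
    ncChi mu 1 = 1 ∧
      ncChi mu n = X * ncChi mu (n - 1) -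
        ∑ i ∈ Finset.Ico 1 n, ncChi mu i * ncChi mu (n - i) := by
  refine ⟨NC.ncChi_one hmu, eq_sub_of_add_eq ?_⟩
  obtain ⟨m, rfl⟩ : ∃ m, n = m + 1 := ⟨n - 1, by omega⟩
  have h := congrArg (PowerSeries.coeff (m + 1)) (NC.chiSeries_add_sq hmu)
  rw [map_add, PowerSeries.coeff_sq_of_constantCoeff_eq_zero NC.constantCoeff_chiSeries (by omega),
    PowerSeries.coeff_succ_X_mul, NC.blockSeries, PowerSeries.coeff_mk,
    NC.blockPoly_eq_X_mul_ncChi (by omega), NC.coeff_chiSeries hmu (by omega)] at h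
  rw [Nat.add_sub_cancel, ← h]
  congr 1
  refine sum_congr rfl fun i hi => ?_
  rw [mem_Ico] at hi
  rw [NC.coeff_chiSeries hmu hi.1, NC.coeff_chiSeries hmu (by omega)]
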